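/- There exists a constant C > 0 such that for every ℓ ∈ ℕ and every v > 0, the Laguerre function satisfies |𝓛_ℓ(v)| = |L_ℓ(v) e^{−v/2}| ≤ C · (2ℓ+1)/v. -/

import Mathlib

/-!
Write `P = L_n`, so that `𝓛_n(t)² = P(t)² e^{-t}`. Then
`d/dt (t P² e^{-t}) = (P² + 2t P P' - t P²) e^{-t} ≤ (P² + t P'²) e^{-t}`,
the difference being `t e^{-t} (P - P')²`. Integrating over `[0, v]` and using
`∫₀^∞ P² e^{-t} = 1` and `∫₀^∞ t P'² e^{-t} = n` gives `v 𝓛_n(v)² ≤ n + 1`, which is enough for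
`v < 64 n`. Both integrals reduce, through `∫₀^∞ t^m e^{-t} = m!`, to alternating sums
`∑ₖ (-1)^k C(n,k) C(k+j,m)`, i.e. `n`-th forward differences of `x ↦ C(x,m)`.
For `v ≥ 64 n` the crude estimate `|P(v)| ≤ ∑ₖ C(n,k) v^k/k! ≤ e^{v/4}` gives
`|𝓛_n(v)| ≤ e^{-v/4} ≤ 4/v`.
-/

open Real

/-- Laguerre polynomial of type 0 and degree ℓ. -/
noncomputable def laguerrePoly (ℓ : ℕ) (v : ℝ) : ℝ :=
  ∑ k ∈ Finset.range (ℓ + 1), (-1 : ℝ) ^ k * (ℓ.choose (ℓ - k) : ℝ) * v ^ k / (k.factorial : ℝ)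

/-- Laguerre function `𝓛_ℓ(v) = L_ℓ(v) e^{-v/2}`. -/
noncomputable def laguerreFun (ℓ : ℕ) (v : ℝ) : ℝ := laguerrePoly ℓ v * Real.exp (-v / 2)

open Finset MeasureTheory
open scoped Nat

theorem sum_neg_one_pow_mul_choose_mul_choose_add_eq_fwdDiff (n j m : ℕ) :
    ∑ k ∈ range (n + 1), (-1 : ℤ) ^ k * n.choose k * (k + j).choose m
      = (-1) ^ n * (fwdDiff 1)^[n] (fun x ↦ (x.choose m : ℤ)) j := by
  rw [fwdDiff_iter_eq_sum_shift, mul_sum]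
  refine sum_congr rfl fun k hk ↦ ?_
  have hk : k ≤ n := Nat.lt_succ_iff.mp (mem_range.mp hk)
  rw [smul_eq_mul, nsmul_one, Nat.cast_id, add_comm j k, ← mul_assoc, ← mul_assoc, ← pow_add,
    show n + (n - k) = k + 2 * (n - k) by omega, pow_add, pow_mul]
  simp

theorem fwdDiff_iter_choose_self (m : ℕ) :
    (fwdDiff 1)^[m] (fun x ↦ (x.choose m : ℤ)) = fun _ ↦ 1 := by
  simpa using fwdDiff_iter_choose 0 m

theorem sum_neg_one_pow_mul_choose_mul_choose_add_self (n j : ℕ) :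
    ∑ k ∈ range (n + 1), (-1 : ℝ) ^ k * n.choose k * (k + j).choose n = (-1) ^ n := by
  have key := sum_neg_one_pow_mul_choose_mul_choose_add_eq_fwdDiff n j n
  rw [fwdDiff_iter_choose_self, mul_one] at key
  exact_mod_cast key

theorem sum_neg_one_pow_mul_choose_mul_choose_add_of_lt {n m : ℕ} (j : ℕ) (h : m < n) :
    ∑ k ∈ range (n + 1), (-1 : ℝ) ^ k * n.choose k * (k + j).choose m = 0 := by
  obtain ⟨r, rfl⟩ := Nat.exists_eq_add_of_lt h
  have hvanish : (fwdDiff 1)^[m + r + 1] (fun x ↦ (x.choose m : ℤ)) = 0 := by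
    rw [add_assoc, add_comm m, Function.iterate_add_apply, fwdDiff_iter_choose_self,
      Function.iterate_succ_apply, fwdDiff_const]
    exact Function.iterate_fixed (fwdDiff_const 1 0) r
  have key := sum_neg_one_pow_mul_choose_mul_choose_add_eq_fwdDiff (m + r + 1) j m
  rw [hvanish, Pi.zero_apply, mul_zero] at key
  exact_mod_cast key

theorem integrableOn_pow_mul_exp_neg (m : ℕ) :
    IntegrableOn (fun t : ℝ ↦ t ^ m * exp (-t)) (Set.Ioi 0) := by
  simpa [mul_comm] using GammaIntegral_convergent (s := m + 1) (by positivity)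

theorem integral_pow_mul_exp_neg (m : ℕ) : ∫ t in Set.Ioi (0 : ℝ), t ^ m * exp (-t) = m ! := by
  simpa [mul_comm, Gamma_nat_eq_factorial] using
    (Gamma_eq_integral (s := m + 1) (by positivity)).symm

theorem sq_sum_mul_pow_mul_exp_neg (c : ℕ → ℝ) (N s : ℕ) (t : ℝ) :
    (∑ k ∈ range N, c k * t ^ k) ^ 2 * t ^ s * exp (-t)
      = ∑ k ∈ range N, ∑ j ∈ range N, c k * c j * (t ^ (k + j + s) * exp (-t)) := by
  rw [sq, sum_mul_sum, sum_mul, sum_mul]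
  refine sum_congr rfl fun k _ ↦ ?_
  rw [sum_mul, sum_mul]
  exact sum_congr rfl fun j _ ↦ by ring

theorem integrableOn_sq_sum_mul_pow_mul_exp_neg (c : ℕ → ℝ) (N s : ℕ) :
    IntegrableOn (fun t ↦ (∑ k ∈ range N, c k * t ^ k) ^ 2 * t ^ s * exp (-t)) (Set.Ioi 0) := by
  simp_rw [sq_sum_mul_pow_mul_exp_neg]
  exact integrable_finsetSum _ fun k _ ↦ integrable_finsetSum _ fun j _ ↦
    (integrableOn_pow_mul_exp_neg _).const_mul _

theorem integral_sq_sum_mul_pow_mul_exp_neg (c : ℕ → ℝ) (N s : ℕ) :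
    ∫ t in Set.Ioi (0 : ℝ), (∑ k ∈ range N, c k * t ^ k) ^ 2 * t ^ s * exp (-t)
      = ∑ k ∈ range N, ∑ j ∈ range N, c k * c j * (k + j + s)! := by
  simp_rw [sq_sum_mul_pow_mul_exp_neg]
  rw [integral_finsetSum _ fun k _ ↦ integrable_finsetSum _ fun j _ ↦
    (integrableOn_pow_mul_exp_neg _).const_mul _]
  refine sum_congr rfl fun k _ ↦ ?_
  rw [integral_finsetSum _ fun j _ ↦ (integrableOn_pow_mul_exp_neg _).const_mul _]
  simp_rw [integral_const_mul, integral_pow_mul_exp_neg]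

noncomputable def laguerreCoeff (n k : ℕ) : ℝ := (-1) ^ k * n.choose k / k !

theorem laguerrePoly_eq_sum (n : ℕ) (v : ℝ) :
    laguerrePoly n v = ∑ k ∈ range (n + 1), laguerreCoeff n k * v ^ k := by
  refine sum_congr rfl fun k hk ↦ ?_
  rw [laguerreCoeff, Nat.choose_symm (Nat.lt_succ_iff.mp (mem_range.mp hk))]
  ring

theorem laguerreCoeff_mul_descFactorial_mul_factorial (n k j s : ℕ) :
    laguerreCoeff n k * k.descFactorial s * (k + j)!
      = (j + s)! * ((-1) ^ k * n.choose k * (k + j).choose (j + s)) := by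
  rcases le_or_gt s k with hs | hs
  · have hd := Nat.factorial_mul_descFactorial hs
    have hc := Nat.choose_mul_factorial_mul_factorial (show j + s ≤ k + j by omega)
    rw [show k + j - (j + s) = k - s by omega] at hc
    have hd0 : (k.descFactorial s : ℝ) ≠ 0 := by
      exact_mod_cast (Nat.descFactorial_pos.mpr hs).ne'
    rw [laguerreCoeff, ← hc, ← hd]
    push_cast
    field_simp
  · rw [Nat.descFactorial_eq_zero_iff_lt.mpr hs,
      Nat.choose_eq_zero_of_lt (show k + j < j + s by omega)]
    simp

theorem sum_laguerreCoeff_mul_factorial (n j : ℕ) :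
    ∑ k ∈ range (n + 1), laguerreCoeff n k * (k + j)!
      = j ! * ∑ k ∈ range (n + 1), (-1 : ℝ) ^ k * n.choose k * (k + j).choose j := by
  rw [mul_sum]
  refine sum_congr rfl fun k _ ↦ ?_
  simpa using laguerreCoeff_mul_descFactorial_mul_factorial n k j 0

theorem sum_succ_mul_laguerreCoeff_succ_mul_factorial (n j : ℕ) :
    ∑ k ∈ range n, (k + 1) * laguerreCoeff n (k + 1) * (k + j + 1)!
      = (j + 1)! * ∑ k ∈ range (n + 1), (-1 : ℝ) ^ k * n.choose k * (k + j).choose (j + 1) := by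
  rw [mul_sum, ← sum_congr rfl fun k _ ↦ laguerreCoeff_mul_descFactorial_mul_factorial n k j 1,
    sum_range_succ']
  simp [add_right_comm, mul_comm]

theorem laguerreCoeff_self_mul (n : ℕ) : laguerreCoeff n n * (n ! * (-1) ^ n) = 1 := by
  rw [laguerreCoeff, Nat.choose_self]
  field_simp
  rw [Nat.cast_one, mul_one, ← pow_mul, mul_comm, pow_mul, neg_one_sq, one_pow]

theorem sum_sum_laguerreCoeff_mul_factorial (n : ℕ) :
    ∑ k ∈ range (n + 1), ∑ j ∈ range (n + 1),
      laguerreCoeff n k * laguerreCoeff n j * (k + j)! = 1 := by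
  have inner (k : ℕ) : ∑ j ∈ range (n + 1), laguerreCoeff n k * laguerreCoeff n j * (k + j)!
      = laguerreCoeff n k *
          (k ! * ∑ i ∈ range (n + 1), (-1 : ℝ) ^ i * n.choose i * (i + k).choose k) := by
    rw [← sum_laguerreCoeff_mul_factorial, mul_sum]
    exact sum_congr rfl fun j _ ↦ by rw [add_comm k j, mul_assoc]
  simp_rw [inner]
  rw [sum_range_succ, sum_eq_zero fun k hk ↦ by
    rw [sum_neg_one_pow_mul_choose_mul_choose_add_of_lt k (mem_range.mp hk), mul_zero, mul_zero],
    zero_add, sum_neg_one_pow_mul_choose_mul_choose_add_self, laguerreCoeff_self_mul]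

theorem sum_sum_succ_mul_laguerreCoeff_succ_mul_factorial (n : ℕ) :
    ∑ k ∈ range n, ∑ j ∈ range n, (k + 1) * laguerreCoeff n (k + 1) *
      ((j + 1) * laguerreCoeff n (j + 1)) * (k + j + 1)! = n := by
  have inner (k : ℕ) : ∑ j ∈ range n, (k + 1) * laguerreCoeff n (k + 1) *
      ((j + 1) * laguerreCoeff n (j + 1)) * (k + j + 1)! = (k + 1) * laguerreCoeff n (k + 1) *
        ((k + 1)! * ∑ i ∈ range (n + 1), (-1 : ℝ) ^ i * n.choose i * (i + k).choose (k + 1)) := by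
    rw [← sum_succ_mul_laguerreCoeff_succ_mul_factorial, mul_sum]
    exact sum_congr rfl fun j _ ↦ by rw [add_comm k j, mul_assoc]
  simp_rw [inner]
  cases n with
  | zero => simp
  | succ m =>
    rw [sum_range_succ, sum_eq_zero fun k hk ↦ by
      rw [sum_neg_one_pow_mul_choose_mul_choose_add_of_lt k (by simpa using mem_range.mp hk),
        mul_zero, mul_zero],
      zero_add, sum_neg_one_pow_mul_choose_mul_choose_add_self, mul_assoc,
      laguerreCoeff_self_mul, mul_one]
    push_cast
    ring

theorem hasDerivAt_laguerrePoly (n : ℕ) (t : ℝ) :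
    HasDerivAt (laguerrePoly n) (∑ k ∈ range n, (k + 1) * laguerreCoeff n (k + 1) * t ^ k) t := by
  have hP : laguerrePoly n
      = fun t ↦ ∑ k ∈ range n, laguerreCoeff n (k + 1) * t ^ (k + 1) + laguerreCoeff n 0 := by
    funext t
    rw [laguerrePoly_eq_sum, sum_range_succ', pow_zero, mul_one]
  rw [hP]
  refine ((HasDerivAt.fun_sum fun k _ ↦ (hasDerivAt_pow (k + 1) t).const_mul
    (laguerreCoeff n (k + 1))).add_const (laguerreCoeff n 0)).congr_deriv ?_
  exact sum_congr rfl fun k _ ↦ by push_cast; ring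

theorem deriv_laguerrePoly (n : ℕ) :
    deriv (laguerrePoly n) = fun t ↦ ∑ k ∈ range n, (k + 1) * laguerreCoeff n (k + 1) * t ^ k :=
  funext fun t ↦ (hasDerivAt_laguerrePoly n t).deriv

theorem integrableOn_laguerrePoly_sq_mul_exp_neg (n : ℕ) :
    IntegrableOn (fun t ↦ laguerrePoly n t ^ 2 * exp (-t)) (Set.Ioi 0) := by
  simpa [laguerrePoly_eq_sum] using
    integrableOn_sq_sum_mul_pow_mul_exp_neg (laguerreCoeff n) (n + 1) 0

theorem integral_laguerrePoly_sq_mul_exp_neg (n : ℕ) :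
    ∫ t in Set.Ioi 0, laguerrePoly n t ^ 2 * exp (-t) = 1 := by
  simpa [laguerrePoly_eq_sum, sum_sum_laguerreCoeff_mul_factorial] using
    integral_sq_sum_mul_pow_mul_exp_neg (laguerreCoeff n) (n + 1) 0

theorem integrableOn_mul_deriv_laguerrePoly_sq_mul_exp_neg (n : ℕ) :
    IntegrableOn (fun t ↦ t * deriv (laguerrePoly n) t ^ 2 * exp (-t)) (Set.Ioi 0) := by
  simpa [deriv_laguerrePoly, mul_comm] using
    integrableOn_sq_sum_mul_pow_mul_exp_neg (fun k ↦ (k + 1) * laguerreCoeff n (k + 1)) n 1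

theorem integral_mul_deriv_laguerrePoly_sq_mul_exp_neg (n : ℕ) :
    ∫ t in Set.Ioi 0, t * deriv (laguerrePoly n) t ^ 2 * exp (-t) = n := by
  have h := integral_sq_sum_mul_pow_mul_exp_neg (fun k ↦ (k + 1) * laguerreCoeff n (k + 1)) n 1
  beta_reduce at h
  rw [sum_sum_succ_mul_laguerreCoeff_succ_mul_factorial] at h
  simpa [deriv_laguerrePoly, mul_comm] using h

theorem laguerreFun_sq (n : ℕ) (v : ℝ) :
    laguerreFun n v ^ 2 = laguerrePoly n v ^ 2 * exp (-v) := by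
  rw [laguerreFun, mul_pow, ← exp_nat_mul]
  ring_nf

theorem mul_laguerreFun_sq_le (n : ℕ) {v : ℝ} (hv : 0 ≤ v) : v * laguerreFun n v ^ 2 ≤ n + 1 := by
  set P := laguerrePoly n
  set P' := deriv (laguerrePoly n)
  have hP (t : ℝ) : HasDerivAt P (P' t) t :=
    (hasDerivAt_laguerrePoly n t).differentiableAt.hasDerivAt
  set g : ℝ → ℝ := fun t ↦ t * P t ^ 2 * exp (-t)
  set G : ℝ → ℝ := fun t ↦ P t ^ 2 * exp (-t) + t * P' t ^ 2 * exp (-t)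
  have hg (t : ℝ) :
      HasDerivAt g ((P t ^ 2 + 2 * t * P t * P' t - t * P t ^ 2) * exp (-t)) t := by
    refine (((hasDerivAt_id' t).fun_mul ((hP t).fun_pow 2)).fun_mul
      (hasDerivAt_neg t).exp).congr_deriv ?_
    push_cast
    ring
  have hg_le (t : ℝ) (ht : 0 ≤ t) :
      (P t ^ 2 + 2 * t * P t * P' t - t * P t ^ 2) * exp (-t) ≤ G t := by
    have : 0 ≤ t * exp (-t) * (P t - P' t) ^ 2 := by positivity
    linarith
  have hG : IntegrableOn G (Set.Ioi 0) :=
    (integrableOn_laguerrePoly_sq_mul_exp_neg n).add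
      (integrableOn_mul_deriv_laguerrePoly_sq_mul_exp_neg n)
  calc v * laguerreFun n v ^ 2 = g v - g 0 := by simp [g, laguerreFun_sq, P, mul_assoc]
    _ ≤ ∫ t in 0..v, G t :=
      intervalIntegral.sub_le_integral_of_hasDeriv_right_of_le hv
        (fun t _ ↦ (hg t).continuousAt.continuousWithinAt) (fun t _ ↦ (hg t).hasDerivWithinAt)
        ((integrableOn_Icc_iff_integrableOn_Ioc).2 (hG.mono_set Set.Ioc_subset_Ioi_self))
        fun t ht ↦ hg_le t ht.1.le
    _ ≤ ∫ t in Set.Ioi 0, G t := by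
      rw [intervalIntegral.integral_of_le hv]
      refine setIntegral_mono_set hG ?_ Set.Ioc_subset_Ioi_self.eventuallyLE
      filter_upwards [self_mem_ae_restrict measurableSet_Ioi] with t ht
      have ht : (0 : ℝ) < t := ht
      positivity
    _ = n + 1 := by
      rw [integral_add (integrableOn_laguerrePoly_sq_mul_exp_neg n)
        (integrableOn_mul_deriv_laguerrePoly_sq_mul_exp_neg n),
        integral_laguerrePoly_sq_mul_exp_neg, integral_mul_deriv_laguerrePoly_sq_mul_exp_neg]
      ring

theorem abs_laguerreCoeff_mul_pow_le {n : ℕ} {v : ℝ} (hv : 0 ≤ v) (hnv : 64 * n ≤ v) (k : ℕ) :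
    |laguerreCoeff n k * v ^ k| ≤ ((v / 8) ^ k / k !) ^ 2 :=
  calc |laguerreCoeff n k * v ^ k| = n.choose k * v ^ k / k ! := by
        simp [laguerreCoeff, abs_mul, abs_div, abs_of_nonneg hv, div_mul_eq_mul_div]
    _ ≤ n ^ k / k ! * v ^ k / k ! := by gcongr; exact Nat.choose_le_pow_div k n
    _ = (n * v) ^ k / k ! ^ 2 := by ring
    _ ≤ ((v / 8) ^ 2) ^ k / k ! ^ 2 := by gcongr; nlinarith
    _ = ((v / 8) ^ k / k !) ^ 2 := by rw [← pow_mul, mul_comm 2 k, pow_mul, ← div_pow]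

theorem abs_laguerrePoly_le_exp {n : ℕ} {v : ℝ} (hv : 0 ≤ v) (hnv : 64 * n ≤ v) :
    |laguerrePoly n v| ≤ exp (v / 4) := by
  have hnonneg : ∀ k ∈ range (n + 1), 0 ≤ (v / 8) ^ k / k ! := fun k _ ↦ by positivity
  calc |laguerrePoly n v| ≤ ∑ k ∈ range (n + 1), ((v / 8) ^ k / k !) ^ 2 := by
        rw [laguerrePoly_eq_sum]
        exact (abs_sum_le_sum_abs _ _).trans
          (sum_le_sum fun k _ ↦ abs_laguerreCoeff_mul_pow_le hv hnv k)
    _ ≤ (∑ k ∈ range (n + 1), (v / 8) ^ k / k !) ^ 2 := sum_sq_le_sq_sum_of_nonneg hnonneg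
    _ ≤ exp (v / 8) ^ 2 :=
        pow_le_pow_left₀ (sum_nonneg hnonneg) (sum_le_exp_of_nonneg (by positivity) _) 2
    _ = exp (v / 4) := by rw [← exp_nat_mul]; ring_nf

theorem abs_laguerreFun_le {n : ℕ} {v : ℝ} (hv : 0 < v) (hnv : 64 * n ≤ v) :
    |laguerreFun n v| ≤ 4 / v := by
  have hexp : exp (v / 4) * exp (-v / 2) = exp (-v / 4) := by rw [← exp_add]; ring_nf
  have hsmall : exp (-v / 4) * v ≤ 4 := by
    have h1 := add_one_le_exp (v / 4)
    have h2 : exp (-v / 4) * exp (v / 4) = 1 := by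
      rw [← exp_add, neg_div, neg_add_cancel, exp_zero]
    nlinarith [mul_le_mul_of_nonneg_left h1 (exp_pos (-v / 4)).le, exp_pos (-v / 4)]
  calc |laguerreFun n v| = |laguerrePoly n v| * exp (-v / 2) := by
        rw [laguerreFun, abs_mul, abs_of_pos (exp_pos _)]
    _ ≤ exp (v / 4) * exp (-v / 2) := by gcongr; exact abs_laguerrePoly_le_exp hv.le hnv
    _ ≤ 4 / v := by rw [hexp, le_div_iff₀ hv]; exact hsmall

theorem laguerreFun_decay_bound :
    ∃ C > (0 : ℝ), ∀ (ℓ : ℕ) (v : ℝ), 0 < v →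
      |laguerreFun ℓ v| ≤ C * (2 * (ℓ : ℝ) + 1) / v := by
  refine ⟨8, by norm_num, fun ℓ v hv ↦ ?_⟩
  rcases le_or_gt (64 * (ℓ : ℝ)) v with hlarge | hsmall
  · calc |laguerreFun ℓ v| ≤ 4 / v := abs_laguerreFun_le hv hlarge
      _ ≤ 8 * (2 * ℓ + 1) / v := by gcongr; linarith [(ℓ.cast_nonneg : (0 : ℝ) ≤ ℓ)]
  · refine abs_le_of_sq_le_sq ?_ (by positivity)
    have henergy := mul_le_mul_of_nonneg_left (mul_laguerreFun_sq_le ℓ hv.le) hv.le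
    rw [div_pow, le_div_iff₀ (by positivity)]
    nlinarith [(ℓ.cast_nonneg : (0 : ℝ) ≤ ℓ)]
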